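/- With the same hierarchical model (Γ ~ Gamma(τa,1), Λ | Γ ~ N(γ̄a + μΓ, σ²Γ)), the conditional expectations satisfy the algebraic identity E[Γ^{−1} | Λ = λ] = ((μ² + 2σ²) E[Γ | Λ = λ] − σ²(2τa − 1)) / (λ − γ̄a)² for λ ≠ γ̄a, provided τa > 3/2 (so that E[Γ^{−1}|Λ] is finite). -/

import Mathlib

open MeasureTheory Real Set

/-- Joint density of `(Λ, Γ)` at `(λ, g)` in the hierarchical model
`Γ ~ Gamma(τa, 1)`, `Λ | Γ = g ~ N(γ̄a + μg, σ²g)`. -/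
noncomputable def jointDensity (τ a γbar μ σ lam g : ℝ) : ℝ :=
  Real.exp (-(lam - γbar * a - μ * g) ^ 2 / (2 * σ ^ 2 * g)) /
      Real.sqrt (2 * π * σ ^ 2 * g) *
    (g ^ (τ * a - 1) * Real.exp (-g) / Real.Gamma (τ * a))

/-- The conditional expectation `E[Γ | Λ = λ]`. -/
noncomputable def condMeanGamma (τ a γbar μ σ lam : ℝ) : ℝ :=
  (∫ g in Ioi (0 : ℝ), g * jointDensity τ a γbar μ σ lam g) /
    ∫ g in Ioi (0 : ℝ), jointDensity τ a γbar μ σ lam g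

/-- The conditional expectation `E[Γ⁻¹ | Λ = λ]`. -/
noncomputable def condMeanGammaInv (τ a γbar μ σ lam : ℝ) : ℝ :=
  (∫ g in Ioi (0 : ℝ), g⁻¹ * jointDensity τ a γbar μ σ lam g) /
    ∫ g in Ioi (0 : ℝ), jointDensity τ a γbar μ σ lam g

open Filter Topology

/-!
Given `Λ = λ`, the density of `Γ` is proportional to `g ^ (τa - 3/2) * exp (-p / g - q * g)` on
`g > 0`, with `p = (λ - γ̄a)² / (2σ²)` and `q = 1 + μ² / (2σ²)`. Hence both conditional means are
ratios of the integrals `I c = ∫₀^∞ g ^ c * exp (-p / g - q * g) dg`. Integrating the derivative of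
`g ^ (c + 1) * exp (-p / g - q * g)`, which vanishes at both ends, over `(0, ∞)` gives
`(c + 1) I c + p I (c - 1) = q I (c + 1)`; this is the recurrence
`K_ν = K_{ν+2} - 2(ν+1)/x K_{ν+1}` in disguise, since `I c = 2 (p/q)^((c+1)/2) K_{c+1}(2√(pq))`.
Taking `c = τa - 3/2`, multiplying by `2σ²` and dividing by `(λ - γ̄a)² I c` yields the identity.
-/

noncomputable def besselKernel (p q c g : ℝ) : ℝ := g ^ c * exp (-p / g - q * g)

noncomputable def besselIntegral (p q c : ℝ) : ℝ := ∫ g in Ioi 0, besselKernel p q c g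

section besselKernel

variable {p q c g : ℝ}

lemma besselKernel_nonneg (hg : 0 ≤ g) : 0 ≤ besselKernel p q c g :=
  mul_nonneg (rpow_nonneg hg c) (exp_pos _).le

lemma besselKernel_le (hp : 0 ≤ p) (hg : 0 ≤ g) :
    besselKernel p q c g ≤ g ^ c * exp (-q * g) := by
  have hpg : 0 ≤ p / g := div_nonneg hp hg
  refine mul_le_mul_of_nonneg_left (exp_le_exp.2 ?_) (rpow_nonneg hg c)
  rw [neg_div]
  linarith

lemma besselKernel_zero (hc : c ≠ 0) : besselKernel p q c 0 = 0 := by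
  simp [besselKernel, zero_rpow hc]

lemma mul_besselKernel (hg : 0 < g) :
    g * besselKernel p q c g = besselKernel p q (c + 1) g := by
  rw [besselKernel, besselKernel, rpow_add_one hg.ne']
  ring

lemma inv_mul_besselKernel (hg : 0 < g) :
    g⁻¹ * besselKernel p q c g = besselKernel p q (c - 1) g := by
  rw [besselKernel, besselKernel, rpow_sub_one hg.ne']
  ring

lemma continuousOn_besselKernel : ContinuousOn (besselKernel p q c) (Ioi 0) := fun x hx =>
  ((continuousAt_rpow_const x c (Or.inl (ne_of_gt hx))).mul
    (((continuousAt_const.div continuousAt_id (ne_of_gt hx)).sub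
      (continuousAt_const.mul continuousAt_id)).rexp)).continuousWithinAt

lemma integrableOn_besselKernel (hc : -1 < c) (hp : 0 ≤ p) (hq : 0 < q) :
    IntegrableOn (besselKernel p q c) (Ioi 0) := by
  have hdom : IntegrableOn (fun g : ℝ => g ^ c * exp (-q * g)) (Ioi 0) := by
    simpa only [rpow_one] using integrableOn_rpow_mul_exp_neg_mul_rpow hc zero_lt_one hq
  refine hdom.mono' (continuousOn_besselKernel.aestronglyMeasurable measurableSet_Ioi) ?_
  filter_upwards [ae_restrict_mem measurableSet_Ioi] with g hg
  rw [Real.norm_of_nonneg (besselKernel_nonneg (le_of_lt hg))]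
  exact besselKernel_le hp (le_of_lt hg)

lemma besselIntegral_pos (hc : -1 < c) (hp : 0 ≤ p) (hq : 0 < q) :
    0 < besselIntegral p q c := by
  refine (setIntegral_pos_iff_support_of_nonneg_ae ?_ (integrableOn_besselKernel hc hp hq)).2 ?_
  · filter_upwards [ae_restrict_mem measurableSet_Ioi] with g hg
    exact besselKernel_nonneg (le_of_lt hg)
  · have hsupp : Function.support (besselKernel p q c) ∩ Ioi 0 = Ioi 0 :=
      inter_eq_self_of_subset_right fun g hg =>
        (mul_pos (rpow_pos_of_pos hg c) (exp_pos _)).ne'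
    simp [hsupp]

lemma hasDerivAt_besselKernel (hg : 0 < g) :
    HasDerivAt (besselKernel p q (c + 1))
      ((c + 1) * besselKernel p q c g + p * besselKernel p q (c - 1) g
        - q * besselKernel p q (c + 1) g) g := by
  have hpow : HasDerivAt (fun x : ℝ => x ^ (c + 1)) ((c + 1) * g ^ c) g := by
    simpa using hasDerivAt_rpow_const (p := c + 1) (Or.inl hg.ne')
  have hinv : HasDerivAt (fun x : ℝ => -p / x) (p / g ^ 2) g := by
    simpa [div_eq_mul_inv] using (hasDerivAt_inv hg.ne').const_mul (-p)
  have hexponent : HasDerivAt (fun x : ℝ => -p / x - q * x) (p / g ^ 2 - q) g :=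
    hinv.sub (((hasDerivAt_id' g).const_mul q).congr_deriv (mul_one q))
  have hsq : g ^ (c + 1) / g ^ 2 = g ^ (c - 1) := by
    rw [show c - 1 = c + 1 - 2 by ring, rpow_sub hg, rpow_two]
  refine (hpow.mul hexponent.exp).congr_deriv ?_
  rw [besselKernel, besselKernel, besselKernel, ← hsq]
  ring

lemma tendsto_besselKernel_atTop (hp : 0 ≤ p) (hq : 0 < q) :
    Tendsto (besselKernel p q c) atTop (𝓝 0) :=
  tendsto_of_tendsto_of_tendsto_of_le_of_le' tendsto_const_nhds
    (tendsto_rpow_mul_exp_neg_mul_atTop_nhds_zero c q hq)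
    (eventually_ge_atTop 0 |>.mono fun _ hg => besselKernel_nonneg hg)
    (eventually_ge_atTop 0 |>.mono fun _ hg => besselKernel_le hp hg)

lemma continuousWithinAt_besselKernel_zero (hc : 0 < c) (hp : 0 ≤ p) :
    ContinuousWithinAt (besselKernel p q c) (Ici 0) 0 := by
  have hdom : Tendsto (fun g : ℝ => g ^ c * exp (-q * g)) (𝓝[Ici 0] 0) (𝓝 0) := by
    have hcont : Continuous fun g : ℝ => g ^ c * exp (-q * g) :=
      (continuous_rpow_const hc.le).mul (continuous_const.mul continuous_id).rexp
    simpa [zero_rpow hc.ne'] using (hcont.tendsto 0).mono_left nhdsWithin_le_nhds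
  rw [ContinuousWithinAt, besselKernel_zero hc.ne']
  exact tendsto_of_tendsto_of_tendsto_of_le_of_le' tendsto_const_nhds hdom
    (eventually_mem_nhdsWithin.mono fun _ hg => besselKernel_nonneg hg)
    (eventually_mem_nhdsWithin.mono fun _ hg => besselKernel_le hp hg)

theorem besselIntegral_recurrence (hc : 0 < c) (hp : 0 ≤ p) (hq : 0 < q) :
    (c + 1) * besselIntegral p q c + p * besselIntegral p q (c - 1)
      = q * besselIntegral p q (c + 1) := by
  simp only [besselIntegral]
  have hint : ∀ d, -1 < d → IntegrableOn (besselKernel p q d) (Ioi 0) :=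
    fun d hd => integrableOn_besselKernel hd hp hq
  have h0 := (hint c (by linarith)).const_mul (c + 1)
  have h1 := (hint (c - 1) (by linarith)).const_mul p
  have h2 := (hint (c + 1) (by linarith)).const_mul q
  have h01 : IntegrableOn
      (fun g => (c + 1) * besselKernel p q c g + p * besselKernel p q (c - 1) g) (Ioi 0) :=
    h0.add h1
  have hftc := integral_Ioi_of_hasDerivAt_of_tendsto
    (continuousWithinAt_besselKernel_zero (by linarith) hp)
    (fun g hg => hasDerivAt_besselKernel hg) (h01.sub h2) (tendsto_besselKernel_atTop hp hq)
  rw [integral_sub h01 h2, integral_add h0 h1, integral_const_mul, integral_const_mul,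
    integral_const_mul, besselKernel_zero (by linarith)] at hftc
  linarith

end besselKernel

section jointDensity

variable {τ a γbar μ σ lam : ℝ}

lemma jointDensity_eq_mul_besselKernel (hσ : σ ≠ 0) {g : ℝ} (hg : 0 < g) :
    jointDensity τ a γbar μ σ lam g =
      exp (μ * (lam - γbar * a) / σ ^ 2) / (√(2 * π * σ ^ 2) * Gamma (τ * a)) *
        besselKernel ((lam - γbar * a) ^ 2 / (2 * σ ^ 2)) (1 + μ ^ 2 / (2 * σ ^ 2))
          (τ * a - 3 / 2) g := by
  have hsqrt : √(2 * π * σ ^ 2 * g) = √(2 * π * σ ^ 2) * √g := sqrt_mul (by positivity) g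
  have hpow : g ^ (τ * a - 1) = g ^ (τ * a - 3 / 2) * √g := by
    rw [sqrt_eq_rpow, ← rpow_add hg]
    ring_nf
  have hexp : exp (-(lam - γbar * a - μ * g) ^ 2 / (2 * σ ^ 2 * g)) * exp (-g) =
      exp (μ * (lam - γbar * a) / σ ^ 2) *
        exp (-((lam - γbar * a) ^ 2 / (2 * σ ^ 2)) / g - (1 + μ ^ 2 / (2 * σ ^ 2)) * g) := by
    rw [← exp_add, ← exp_add]
    congr 1
    field_simp
    ring
  have hsqrt_g : √g / √g = 1 := div_self (sqrt_pos.2 hg).ne'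
  rw [jointDensity, besselKernel, hsqrt, hpow]
  calc _ = exp (-(lam - γbar * a - μ * g) ^ 2 / (2 * σ ^ 2 * g)) * exp (-g) *
        g ^ (τ * a - 3 / 2) / (√(2 * π * σ ^ 2) * Gamma (τ * a)) * (√g / √g) := by ring
    _ = _ := by rw [hsqrt_g, hexp]; ring

lemma setIntegral_mul_jointDensity (hσ : σ ≠ 0) (φ : ℝ → ℝ) :
    ∫ g in Ioi 0, φ g * jointDensity τ a γbar μ σ lam g =
      exp (μ * (lam - γbar * a) / σ ^ 2) / (√(2 * π * σ ^ 2) * Gamma (τ * a)) *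
        ∫ g in Ioi 0, φ g * besselKernel ((lam - γbar * a) ^ 2 / (2 * σ ^ 2))
          (1 + μ ^ 2 / (2 * σ ^ 2)) (τ * a - 3 / 2) g := by
  rw [← integral_const_mul]
  refine setIntegral_congr_fun measurableSet_Ioi fun g hg => ?_
  rw [jointDensity_eq_mul_besselKernel hσ hg, mul_left_comm]

lemma setIntegral_mul_jointDensity_div (hσ : σ ≠ 0) (hτa : 0 < τ * a) (φ : ℝ → ℝ) :
    (∫ g in Ioi 0, φ g * jointDensity τ a γbar μ σ lam g) /
        ∫ g in Ioi 0, jointDensity τ a γbar μ σ lam g =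
      (∫ g in Ioi 0, φ g * besselKernel ((lam - γbar * a) ^ 2 / (2 * σ ^ 2))
          (1 + μ ^ 2 / (2 * σ ^ 2)) (τ * a - 3 / 2) g) /
        besselIntegral ((lam - γbar * a) ^ 2 / (2 * σ ^ 2)) (1 + μ ^ 2 / (2 * σ ^ 2))
          (τ * a - 3 / 2) := by
  have hden := setIntegral_mul_jointDensity (τ := τ) (a := a) (γbar := γbar) (μ := μ) (lam := lam)
    hσ fun _ => 1
  simp only [one_mul] at hden
  have hΓ := Gamma_pos_of_pos hτa
  rw [hden, setIntegral_mul_jointDensity hσ, mul_div_mul_left _ _ (by positivity), besselIntegral]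

lemma condMeanGamma_eq_div (hσ : σ ≠ 0) (hτa : 0 < τ * a) :
    condMeanGamma τ a γbar μ σ lam =
      besselIntegral ((lam - γbar * a) ^ 2 / (2 * σ ^ 2)) (1 + μ ^ 2 / (2 * σ ^ 2))
          (τ * a - 3 / 2 + 1) /
        besselIntegral ((lam - γbar * a) ^ 2 / (2 * σ ^ 2)) (1 + μ ^ 2 / (2 * σ ^ 2))
          (τ * a - 3 / 2) := by
  rw [condMeanGamma, setIntegral_mul_jointDensity_div hσ hτa]
  congr 1
  exact setIntegral_congr_fun measurableSet_Ioi fun g hg => mul_besselKernel hg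

lemma condMeanGammaInv_eq_div (hσ : σ ≠ 0) (hτa : 0 < τ * a) :
    condMeanGammaInv τ a γbar μ σ lam =
      besselIntegral ((lam - γbar * a) ^ 2 / (2 * σ ^ 2)) (1 + μ ^ 2 / (2 * σ ^ 2))
          (τ * a - 3 / 2 - 1) /
        besselIntegral ((lam - γbar * a) ^ 2 / (2 * σ ^ 2)) (1 + μ ^ 2 / (2 * σ ^ 2))
          (τ * a - 3 / 2) := by
  rw [condMeanGammaInv, setIntegral_mul_jointDensity_div hσ hτa]
  congr 1
  exact setIntegral_congr_fun measurableSet_Ioi fun g hg => inv_mul_besselKernel hg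

end jointDensity

theorem condMeanGammaInv_eq_general (τ a γbar μ σ lam : ℝ)
    (hτa : 3 / 2 < τ * a) (hσ : 0 < σ)
    (hlam : lam ≠ γbar * a) :
    condMeanGammaInv τ a γbar μ σ lam
      = ((μ ^ 2 + 2 * σ ^ 2) * condMeanGamma τ a γbar μ σ lam
            - σ ^ 2 * (2 * (τ * a) - 1)) / (lam - γbar * a) ^ 2 := by
  rw [condMeanGammaInv_eq_div hσ.ne' (by linarith), condMeanGamma_eq_div hσ.ne' (by linarith)]
  set s := lam - γbar * a
  set p := s ^ 2 / (2 * σ ^ 2) with hp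
  set q := 1 + μ ^ 2 / (2 * σ ^ 2) with hq
  set m := τ * a - 3 / 2
  have hm : 0 < m := sub_pos.2 hτa
  have hI : besselIntegral p q m ≠ 0 :=
    (besselIntegral_pos (by linarith) (by positivity) (by positivity)).ne'
  have hrec := besselIntegral_recurrence (p := p) (q := q) (c := m) hm (by positivity)
    (by positivity)
  have hs : s ≠ 0 := sub_ne_zero.2 hlam
  have hσ' : σ ≠ 0 := hσ.ne'
  have hp' : 2 * σ ^ 2 * p = s ^ 2 := by rw [hp]; field_simp
  have hq' : 2 * σ ^ 2 * q = 2 * σ ^ 2 + μ ^ 2 := by rw [hq]; field_simp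
  field_simp
  linear_combination (2 * σ ^ 2) * hrec - besselIntegral p q (m - 1) * hp'
    + besselIntegral p q (m + 1) * hq'

/-- The identity
`E[Γ⁻¹ | Λ = λ] = ((μ² + 2σ²) E[Γ | Λ = λ] − σ²(2τa − 1)) / (λ − γ̄a)²`
for `λ ≠ γ̄a` and `τa > 3/2`. -/
theorem condMeanGammaInv_eq (τ a γbar μ σ lam : ℝ)
    (hτ : 0 < τ) (ha : 0 < a) (hτa : 3 / 2 < τ * a) (hσ : 0 < σ)
    (hlam : lam ≠ γbar * a) :
    condMeanGammaInv τ a γbar μ σ lam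
      = ((μ ^ 2 + 2 * σ ^ 2) * condMeanGamma τ a γbar μ σ lam
            - σ ^ 2 * (2 * (τ * a) - 1)) / (lam - γbar * a) ^ 2 :=
  condMeanGammaInv_eq_general τ a γbar μ σ lam hτa hσ hlam
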